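/- Let σ₁ and σ₂ be commuting non-identity two-qubit Pauli operators that are not equal up to phase, and set σ₃ = σ₁σ₂. For each binary string x = (x₁, x₂, x₃) ∈ {0,1}³ define P_x = (1/4)(1 + (−1)^{x₁} σ₁ + (−1)^{x₂} σ₂ + (−1)^{x₃} σ₃), where 1 is the 4×4 identity. If A ⊆ {0,1}³ has |A| = 4 and Tr(P_x P_y) = 0 for all distinct x, y ∈ A, then for each coordinate j ∈ {1, 2, 3} exactly two of the four strings in A have x_j = 1; equivalently, any two distinct strings in A have Hamming distance exactly 2. -/

import Mathlib

open Matrix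

noncomputable section

/-- Matrices on the Hilbert space of `n` qubits, with rows and columns indexed by
bit strings `Fin n → Fin 2`. -/
abbrev QMat (n : ℕ) := Matrix (Fin n → Fin 2) (Fin n → Fin 2) ℂ

/-- The single-qubit identity. -/
def pI : Matrix (Fin 2) (Fin 2) ℂ := 1

/-- The single-qubit Pauli X. -/
def pX : Matrix (Fin 2) (Fin 2) ℂ := !![0, 1; 1, 0]

/-- The single-qubit Pauli Y. -/
def pY : Matrix (Fin 2) (Fin 2) ℂ := !![0, -Complex.I; Complex.I, 0]

/-- The single-qubit Pauli Z. -/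
def pZ : Matrix (Fin 2) (Fin 2) ℂ := !![1, 0; 0, -1]

/-- The `n`-fold Kronecker product `W 0 ⊗ ⋯ ⊗ W (n-1)`, realized on indices
`Fin n → Fin 2`. -/
def kron (n : ℕ) (W : Fin n → Matrix (Fin 2) (Fin 2) ℂ) : QMat n :=
  fun v w => ∏ j, W j (v j) (w j)

/-- `M` is an `n`-qubit Pauli operator: an `n`-fold Kronecker product of matrices
from `{I₂, X, Y, Z}`. -/
def IsPauliOp (n : ℕ) (M : QMat n) : Prop :=
  ∃ W : Fin n → Matrix (Fin 2) (Fin 2) ℂ,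
    (∀ j, W j = pI ∨ W j = pX ∨ W j = pY ∨ W j = pZ) ∧ M = kron n W

/-- Two matrices are equal up to phase if one is a nonzero scalar multiple of the other. -/
def PhaseEq {m : Type*} (A B : Matrix m m ℂ) : Prop := ∃ c : ℂ, c ≠ 0 ∧ A = c • B

/-- A maximal commuting Pauli class in dimension `d = 2 ^ n`: a set of `d - 1`
pairwise commuting non-identity `n`-qubit Pauli operators, pairwise distinct up to phase. -/
def IsMaxClass (n : ℕ) (C : Set (QMat n)) : Prop :=
  C.Finite ∧ C.ncard = 2 ^ n - 1 ∧
  (∀ U ∈ C, IsPauliOp n U ∧ U ≠ 1) ∧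
  (∀ U ∈ C, ∀ V ∈ C, U * V = V * U) ∧
  (∀ U ∈ C, ∀ V ∈ C, U ≠ V → ¬ PhaseEq U V)

/-- Two classes are disjoint if no member of one is equal up to phase to a member of the other. -/
def ClassDisjoint {n : ℕ} (C D : Set (QMat n)) : Prop :=
  ∀ U ∈ C, ∀ V ∈ D, ¬ PhaseEq U V

/-- Two classes are equal up to phase (as sets of operators). -/
def ClassPhaseEq {n : ℕ} (C D : Set (QMat n)) : Prop :=
  (∀ U ∈ C, ∃ V ∈ D, PhaseEq U V) ∧ (∀ V ∈ D, ∃ U ∈ C, PhaseEq U V)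

/-- The standard Hermitian inner product on `ι → ℂ` (conjugate-linear in the first slot). -/
def cinner {ι : Type*} [Fintype ι] (x y : ι → ℂ) : ℂ :=
  ∑ k, (starRingEnd ℂ) (x k) * y k

/-! Since `σ₁`, `σ₂` and `σ₃ = σ₁σ₂` commute, square to `1` and are traceless, `{1, σ₁, σ₂, σ₃}`
is orthogonal for the trace form, so `Tr (P x * P y) = (1 + ∑ⱼ (-1)^(xⱼ + yⱼ)) / 4
= (4 - 2 d(x, y)) / 4`. Trace-orthogonality therefore means Hamming distance `2`, and four
strings of `{0,1}³` at pairwise distance `2` form a parity class, which is balanced in every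
coordinate. -/

lemma kron_mul (n : ℕ) (W V : Fin n → Matrix (Fin 2) (Fin 2) ℂ) :
    kron n W * kron n V = kron n (fun j => W j * V j) := by
  ext v w
  simp only [kron, Matrix.mul_apply, ← Finset.prod_mul_distrib]
  rw [Finset.prod_univ_sum, ← Fintype.piFinset_univ]

lemma kron_one (n : ℕ) : kron n (fun _ => (1 : Matrix (Fin 2) (Fin 2) ℂ)) = 1 := by
  ext v w
  simp only [kron, Matrix.one_apply, Finset.prod_boole]
  simp [funext_iff]

lemma trace_kron (n : ℕ) (W : Fin n → Matrix (Fin 2) (Fin 2) ℂ) :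
    (kron n W).trace = ∏ j, (W j).trace := by
  simp only [Matrix.trace, Matrix.diag, kron]
  rw [Finset.prod_univ_sum, ← Fintype.piFinset_univ]

def pauliSet : Set (Matrix (Fin 2) (Fin 2) ℂ) := {pI, pX, pY, pZ}

lemma mul_self_of_mem_pauliSet {W : Matrix (Fin 2) (Fin 2) ℂ} (hW : W ∈ pauliSet) :
    W * W = 1 := by
  rcases hW with rfl | rfl | rfl | rfl <;>
    ext i j <;> fin_cases i <;> fin_cases j <;>
    simp [pI, pX, pY, pZ, Matrix.mul_apply]

lemma trace_mul_eq_zero_of_mem_pauliSet {W V : Matrix (Fin 2) (Fin 2) ℂ}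
    (hW : W ∈ pauliSet) (hV : V ∈ pauliSet) (h : W ≠ V) : (W * V).trace = 0 := by
  rcases hW with rfl | rfl | rfl | rfl <;> rcases hV with rfl | rfl | rfl | rfl <;>
    first
    | exact absurd rfl h
    | simp [pI, pX, pY, pZ, Matrix.trace_fin_two]

lemma trace_kron_mul_kron_eq_zero {n : ℕ} {W V : Fin n → Matrix (Fin 2) (Fin 2) ℂ}
    (hW : ∀ j, W j ∈ pauliSet) (hV : ∀ j, V j ∈ pauliSet) (h : W ≠ V) :
    (kron n W * kron n V).trace = 0 := by
  obtain ⟨j, hj⟩ := Function.ne_iff.mp h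
  rw [kron_mul, trace_kron]
  exact Finset.prod_eq_zero (Finset.mem_univ j)
    (trace_mul_eq_zero_of_mem_pauliSet (hW j) (hV j) hj)

namespace IsPauliOp

variable {n : ℕ} {M N : QMat n}

lemma mul_self (hM : IsPauliOp n M) : M * M = 1 := by
  obtain ⟨W, hW, rfl⟩ := hM
  rw [kron_mul, ← kron_one]
  exact congrArg _ (funext fun j => mul_self_of_mem_pauliSet (hW j))

lemma trace_mul_eq_zero (hM : IsPauliOp n M) (hN : IsPauliOp n N) (h : ¬ PhaseEq M N) :
    (M * N).trace = 0 := by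
  obtain ⟨W, hW, rfl⟩ := hM
  obtain ⟨V, hV, rfl⟩ := hN
  refine trace_kron_mul_kron_eq_zero hW hV fun hWV => h ⟨1, one_ne_zero, ?_⟩
  rw [hWV, one_smul]

lemma trace_eq_zero (hM : IsPauliOp n M) (h : M ≠ 1) : M.trace = 0 := by
  obtain ⟨W, hW, rfl⟩ := hM
  have hI : kron n (fun _ => pI) = 1 := kron_one n
  rw [← mul_one (kron n W), ← hI]
  refine trace_kron_mul_kron_eq_zero hW (fun _ => Or.inl rfl) fun hWI => h ?_
  rw [hWI, hI]

end IsPauliOp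

section KleinFour

variable {m R : Type*} [Fintype m] [DecidableEq m] [CommRing R]

lemma trace_mul_of_kleinFour {a b : Matrix m m R} (ha : a * a = 1) (hb : b * b = 1)
    (hab : a * b = b * a) (hta : a.trace = 0) (htb : b.trace = 0) (htab : (a * b).trace = 0)
    (c₁ c₂ c₃ d₁ d₂ d₃ : R) :
    ((1 + c₁ • a + c₂ • b + c₃ • (a * b)) * (1 + d₁ • a + d₂ • b + d₃ • (a * b))).trace =
      (1 + c₁ * d₁ + c₂ * d₂ + c₃ * d₃) * Fintype.card m := by
  have e1 : a * (a * b) = b := by rw [← mul_assoc, ha, one_mul]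
  have e2 : a * b * a = b := by rw [hab, mul_assoc, ha, mul_one]
  have e3 : b * (a * b) = a := by rw [hab, ← mul_assoc, hb, one_mul]
  have e4 : a * b * b = a := by rw [mul_assoc, hb, mul_one]
  have e5 : a * b * (a * b) = 1 := by rw [mul_assoc, e3, ha]
  simp only [add_mul, mul_add, one_mul, mul_one, smul_mul_assoc, mul_smul_comm,
    ha, hb, e1, e2, e3, e4, e5, ← hab, trace_add, trace_smul, hta, htb, htab, trace_one,
    smul_eq_mul]
  ring

end KleinFour

lemma neg_one_pow_mul_neg_one_pow_fin_two {R : Type*} [Ring R] (a b : Fin 2) :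
    (-1 : R) ^ a.val * (-1) ^ b.val = 1 - 2 * if a = b then 0 else 1 := by
  fin_cases a <;> fin_cases b <;> norm_num

lemma sum_neg_one_pow_mul_neg_one_pow {ι R : Type*} [Fintype ι] [Ring R] (x y : ι → Fin 2) :
    ∑ i, (-1 : R) ^ (x i).val * (-1) ^ (y i).val = Fintype.card ι - 2 * hammingDist x y := by
  simp only [neg_one_pow_mul_neg_one_pow_fin_two, Finset.sum_sub_distrib, ← Finset.mul_sum,
    hammingDist, Finset.card_filter]
  push_cast
  simp

set_option maxRecDepth 10000 in
lemma card_filter_eq_two_of_hammingDist_eq_two (A : Finset (Fin 3 → Fin 2)) (hA : A.card = 4)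
    (h : ∀ x ∈ A, ∀ y ∈ A, x ≠ y → hammingDist x y = 2) (j : Fin 3) :
    (A.filter fun x => x j = 1).card = 2 := by
  -- `decide` runs through all 256 subsets of `{0,1}³`.
  revert j hA h; revert A; decide

/-- For commuting non-identity two-qubit Pauli operators `σ₁`, `σ₂` not equal
up to phase, with `σ₃ = σ₁σ₂` and projectors
`P x = (1/4)(1 + (−1)^{x₁} σ₁ + (−1)^{x₂} σ₂ + (−1)^{x₃} σ₃)`, any four binary strings with
pairwise trace-orthogonal projectors have, in each coordinate, exactly two strings with
bit `1`; equivalently, they have pairwise Hamming distance exactly `2`. -/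
theorem projector_strings_balanced (σ₁ σ₂ : QMat 2)
    (h1 : IsPauliOp 2 σ₁) (h1' : σ₁ ≠ 1)
    (h2 : IsPauliOp 2 σ₂) (h2' : σ₂ ≠ 1)
    (hcomm : σ₁ * σ₂ = σ₂ * σ₁) (hne : ¬ PhaseEq σ₁ σ₂)
    (P : (Fin 3 → Fin 2) → QMat 2)
    (hP : ∀ x, P x = (1 / 4 : ℂ) •
      ((1 : QMat 2) + ((-1 : ℂ)) ^ (x 0).val • σ₁ + ((-1 : ℂ)) ^ (x 1).val • σ₂ +
        ((-1 : ℂ)) ^ (x 2).val • (σ₁ * σ₂)))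
    (A : Finset (Fin 3 → Fin 2)) (hA : A.card = 4)
    (horth : ∀ x ∈ A, ∀ y ∈ A, x ≠ y → (P x * P y).trace = 0) :
    (∀ j : Fin 3, (A.filter fun x => x j = 1).card = 2) ∧
    (∀ x ∈ A, ∀ y ∈ A, x ≠ y → hammingDist x y = 2) := by
  have htrace : ∀ x y,
      (P x * P y).trace = (1 + ∑ i, (-1 : ℂ) ^ (x i).val * (-1) ^ (y i).val) / 4 := by
    intro x y
    rw [hP, hP, smul_mul_smul_comm, trace_smul,
      trace_mul_of_kleinFour h1.mul_self h2.mul_self hcomm (h1.trace_eq_zero h1')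
        (h2.trace_eq_zero h2') (h1.trace_mul_eq_zero h2 hne),
      Fin.sum_univ_three, Fintype.card_fun, Fintype.card_fin]
    push_cast
    ring
  have hdist : ∀ x ∈ A, ∀ y ∈ A, x ≠ y → hammingDist x y = 2 := by
    intro x hx y hy hxy
    have h := horth x hx y hy hxy
    rw [htrace, sum_neg_one_pow_mul_neg_one_pow, Fintype.card_fin] at h
    have : (hammingDist x y : ℂ) = 2 := by linear_combination -2 * h
    exact_mod_cast this
  exact ⟨card_filter_eq_two_of_hammingDist_eq_two A hA hdist, hdist⟩
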